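/- arXiv:math/0208222 — 6 statements merged into one kernel-verified Lean document; each statement's English description precedes it below -/
import Mathlib

section
/- Let C be a category and F, G : C ⥤ Set functors. Let D_{FΔG} be the set of triples (X, x₀, x₁) with X an object of C, x₀ ∈ F X and x₁ ∈ G X, with the relation (X, x₀, x₁) ≤ (Y, y₀, y₁) iff there exists f : X ⟶ Y with F(f)(x₀) = y₀ and G(f)(x₁) = y₁; this relation is reflexive and transitive. Let 𝒟 be the set of finite subsets of D_{FΔG} with the free inf-lattice preorder (A ≤ B iff for every b ∈ B there exists a ∈ A with a ≤ b), and let λ_X : F X × G X → 𝒟 be the map (x₀, x₁) ↦ {(X, x₀, x₁)}. Then for every partially ordered meet-semilattice H with greatest element ⊤ and every family of functions φ_X : F X × G X → H (one for each object X of C) satisfying φ_X(x₀, x₁) ≤ φ_Y(F(f)(x₀), G(f)(x₁)) for every morphism f : X ⟶ Y, there is a unique function φ : 𝒟 → H that is monotone, satisfies φ(∅) = ⊤ and φ(A ∪ B) = φ(A) ⊓ φ(B), and satisfies φ ∘ λ_X = φ_X for every X. -/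
open CategoryTheory

universe u v w w'

/-- The diagram `D_{FΔG}` of a pair of set-valued functors: triples
`(X, x₀, x₁)` with `x₀ ∈ F X`, `x₁ ∈ G X`. -/
def DFG {C : Type u} [Category.{v} C] (F G : C ⥤ Type w) : Type (max u w) :=
  Σ X : C, F.obj X × G.obj X

/-- The preorder relation on `D_{FΔG}` : `(X, x₀, x₁) ≤ (Y, y₀, y₁)` iff there
is `f : X ⟶ Y` with `F(f)(x₀) = y₀` and `G(f)(x₁) = y₁`. -/
def DFG.le {C : Type u} [Category.{v} C] {F G : C ⥤ Type w}
    (d e : DFG F G) : Prop :=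
  ∃ f : d.1 ⟶ e.1, F.map f d.2.1 = e.2.1 ∧ G.map f d.2.2 = e.2.2

/-- The free inf-lattice preorder on finite subsets of `D_{FΔG}`. -/
def DFG.finLe {C : Type u} [Category.{v} C] {F G : C ⥤ Type w}
    (A B : Finset (DFG F G)) : Prop :=
  ∀ b ∈ B, ∃ a ∈ A, DFG.le a b

/-! A map `ψ` from finite sets to an inf-semilattice that sends `∅` to `⊤` and unions to meets
is determined by its values on singletons, so `ψ` must be `A ↦ ⨅_{(X, x₀, x₁) ∈ A} φ_X(x₀, x₁)`;
this candidate is monotone for the free inf-lattice preorder because `φ` is natural. -/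

theorem Finset.eq_inf_singleton_of_map_union {α H : Type*} [DecidableEq α] [SemilatticeInf H]
    [OrderTop H] {ψ : Finset α → H} (hempty : ψ ∅ = ⊤)
    (hunion : ∀ A B, ψ (A ∪ B) = ψ A ⊓ ψ B) (A : Finset α) :
    ψ A = A.inf fun a => ψ {a} := by
  induction A using Finset.induction with
  | empty => rw [hempty, Finset.inf_empty]
  | insert a A _ ih => rw [Finset.inf_insert, Finset.insert_eq, hunion, ih]

namespace DFG

variable {C : Type u} [Category.{v} C] {F G : C ⥤ Type w}

theorem le_refl (d : DFG F G) : d.le d :=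
  ⟨𝟙 d.1, by simp, by simp⟩

theorem le_trans {d e k : DFG F G} : d.le e → e.le k → d.le k
  | ⟨f, hf₀, hf₁⟩, ⟨g, hg₀, hg₁⟩ =>
    ⟨f ≫ g, by simp [hf₀, hg₀], by simp [hf₁, hg₁]⟩

section Natural

variable {H : Type w'} {φ : ∀ X : C, F.obj X × G.obj X → H}

theorem le.map_le [Preorder H]
    (hφ : ∀ {X Y : C} (f : X ⟶ Y) (x₀ : F.obj X) (x₁ : G.obj X),
      φ X (x₀, x₁) ≤ φ Y (F.map f x₀, G.map f x₁))
    {d e : DFG F G} : d.le e → φ d.1 d.2 ≤ φ e.1 e.2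
  | ⟨f, hf₀, hf₁⟩ => by simpa only [hf₀, hf₁] using hφ f d.2.1 d.2.2

theorem finLe.inf_le_inf [SemilatticeInf H] [OrderTop H]
    (hφ : ∀ {X Y : C} (f : X ⟶ Y) (x₀ : F.obj X) (x₁ : G.obj X),
      φ X (x₀, x₁) ≤ φ Y (F.map f x₀, G.map f x₁))
    {A B : Finset (DFG F G)} (h : finLe A B) :
    (A.inf fun d => φ d.1 d.2) ≤ B.inf fun d => φ d.1 d.2 :=
  Finset.le_inf fun b hb =>
    let ⟨_, ha, hab⟩ := h b hb
    (Finset.inf_le ha).trans (hab.map_le hφ)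

end Natural

end DFG

/-- Universal property of the free inf-lattice `𝒟(D_{FΔG})` on the diagram of
natural relations between two set-valued functors `F` and `G`. -/
theorem stmt2 {C : Type u} [Category.{v} C] (F G : C ⥤ Type w)
    [DecidableEq (DFG F G)] :
    -- the relation on `D_{FΔG}` is reflexive and transitive
    (∀ d : DFG F G, DFG.le d d) ∧
    (∀ d e k : DFG F G, DFG.le d e → DFG.le e k → DFG.le d k) ∧
    -- the universal property
    (∀ (H : Type w') [SemilatticeInf H] [OrderTop H]
      (φ : ∀ X : C, F.obj X × G.obj X → H),
      (∀ {X Y : C} (f : X ⟶ Y) (x₀ : F.obj X) (x₁ : G.obj X),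
        φ X (x₀, x₁) ≤ φ Y (F.map f x₀, G.map f x₁)) →
      ∃! ψ : Finset (DFG F G) → H,
        (∀ A B : Finset (DFG F G), DFG.finLe A B → ψ A ≤ ψ B) ∧
        ψ ∅ = ⊤ ∧
        (∀ A B : Finset (DFG F G), ψ (A ∪ B) = ψ A ⊓ ψ B) ∧
        (∀ (X : C) (x₀ : F.obj X) (x₁ : G.obj X),
          ψ {⟨X, (x₀, x₁)⟩} = φ X (x₀, x₁))) := by
  refine ⟨DFG.le_refl, fun _ _ _ => DFG.le_trans, fun H _ _ φ hφ => ?_⟩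
  refine ⟨fun A => A.inf fun d => φ d.1 d.2,
    ⟨fun A B => DFG.finLe.inf_le_inf hφ, Finset.inf_empty, fun A B => Finset.inf_union,
      fun X x₀ x₁ => Finset.inf_singleton⟩, ?_⟩
  rintro ψ ⟨-, hempty, hunion, hsingleton⟩
  funext A
  rw [Finset.eq_inf_singleton_of_map_union hempty hunion A]
  exact Finset.inf_congr rfl fun d _ => hsingleton d.1 d.2.1 d.2.2
end

section
/- Let C and D be categories, T : C ⥤ D and S : D ⥤ C functors with S left adjoint to T, with unit η : 𝟭_D ⟶ S ⋙ T and counit ε : T ⋙ S ⟶ 𝟭_C. Let F : C ⥤ Set and G : D ⥤ Set be functors and θ : F ≅ T ⋙ G a natural isomorphism. Define σ : G ⟶ S ⋙ F by σ_Y = (θ_{S Y})⁻¹ ∘ G(η_Y). For a set-valued functor P on a category E, let D_{ΔP} denote the preorder whose elements are triples (X, x₀, x₁) with x₀, x₁ ∈ P X, and (X, x₀, x₁) ≤ (Y, y₀, y₁) iff there exists f : X ⟶ Y with P(f)(x₀) = y₀ and P(f)(x₁) = y₁. Define aut(T) : D_{ΔF} → D_{ΔG} by (X, x₀, x₁) ↦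 (T X, θ_X(x₀), θ_X(x₁)) and aut(S) : D_{ΔG} → D_{ΔF} by (Y, y₀, y₁) ↦ (S Y, σ_Y(y₀), σ_Y(y₁)). Then aut(T) and aut(S) are monotone, and aut(S) is left adjoint to aut(T): for all d ∈ D_{ΔG} and c ∈ D_{ΔF}, aut(S)(d) ≤ c if and only if d ≤ aut(T)(c). -/
/-!
The adjunction `S ⊣ T` induces an adjunction `(T ⋙ -) ⊣ (S ⋙ -)` between the functor categories
`D ⥤ Type` and `C ⥤ Type`, and `σ` is the transpose of `θ⁻¹ : T ⋙ G ⟶ F` under it. The bijection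
`f ↦ f♯ = η_Y ≫ T f` between `S Y ⟶ X` and `Y ⟶ T X` then matches witnesses of the two orders:
`G(f♯) y = θ (F f (σ y))`, so `F f (σ y) = x` iff `G(f♯) y = θ x`, as `θ` is invertible. This is
the Galois connection, and monotonicity of both maps follows from it because `D_{ΔP}` is a
preorder.
-/

open CategoryTheory

universe u v w

/-- The diagram `D_{ΔP}` of a set-valued functor `P`: triples `(X, x₀, x₁)`
with `x₀, x₁ ∈ P X`. -/
def DDelta {E : Type u} [Category.{v} E] (P : E ⥤ Type w) : Type (max u w) :=
  Σ X : E, P.obj X × P.obj X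

/-- The preorder on `D_{ΔP}`: `(X, x₀, x₁) ≤ (Y, y₀, y₁)` iff there is
`f : X ⟶ Y` with `P(f)(x₀) = y₀` and `P(f)(x₁) = y₁`. -/
def DDelta.le {E : Type u} [Category.{v} E] {P : E ⥤ Type w}
    (d e : DDelta P) : Prop :=
  ∃ f : d.1 ⟶ e.1, P.map f d.2.1 = e.2.1 ∧ P.map f d.2.2 = e.2.2

namespace DDelta

variable {E : Type u} [Category.{v} E]

instance (P : E ⥤ Type w) : Preorder (DDelta P) where
  le := DDelta.le
  le_refl d := ⟨𝟙 d.1, by simp, by simp⟩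
  le_trans _ _ _ := fun ⟨f, hf₀, hf₁⟩ ⟨g, hg₀, hg₁⟩ =>
    ⟨f ≫ g, by simp [hf₀, hg₀], by simp [hf₁, hg₁]⟩

def map {E' : Type u} [Category.{v} E'] {P : E ⥤ Type w} {Q : E' ⥤ Type w} {T : E ⥤ E'}
    (α : P ⟶ T ⋙ Q) (d : DDelta P) : DDelta Q :=
  ⟨T.obj d.1, (α.app d.1 d.2.1, α.app d.1 d.2.2)⟩

end DDelta

namespace CategoryTheory.Adjunction

variable {C : Type u} [Category.{v} C] {D : Type u} [Category.{v} D]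
  {T : C ⥤ D} {S : D ⥤ C} (adj : S ⊣ T) {F : C ⥤ Type w} {G : D ⥤ Type w}

lemma whiskerLeft_homEquiv_app_apply (α : T ⋙ G ⟶ F) (Y : D) (y : G.obj Y) :
    ((adj.whiskerLeft (Type w)).homEquiv G F α).app Y y =
      α.app (S.obj Y) (G.map (adj.unit.app Y) y) :=
  rfl

lemma map_homEquiv_apply_eq_iff (θ : F ≅ T ⋙ G) {Y : D} {X : C} (f : S.obj Y ⟶ X)
    (y : G.obj Y) (x : F.obj X) :
    G.map (adj.homEquiv Y X f) y = θ.hom.app X x ↔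
      F.map f (((adj.whiskerLeft (Type w)).homEquiv G F θ.inv).app Y y) = x := by
  rw [whiskerLeft_homEquiv_app_apply, ← NatTrans.naturality_apply, ← θ.app_inv,
    ← (θ.app X).toEquiv.symm.injective.eq_iff]
  simp [homEquiv_unit]

theorem gc_dDeltaMap (θ : F ≅ T ⋙ G) :
    GaloisConnection (DDelta.map ((adj.whiskerLeft (Type w)).homEquiv G F θ.inv))
      (DDelta.map θ.hom) := fun d c =>
  (adj.homEquiv d.1 c.1).exists_congr fun f =>
    and_congr (adj.map_homEquiv_apply_eq_iff θ f _ _).symm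
      (adj.map_homEquiv_apply_eq_iff θ f _ _).symm

end CategoryTheory.Adjunction

/-- Given an adjunction `S ⊣ T`, functors `F : C ⥤ Set`, `G : D ⥤ Set` and a
natural isomorphism `θ : F ≅ T ⋙ G`, the induced maps
`aut(T) : D_{ΔF} → D_{ΔG}` and `aut(S) : D_{ΔG} → D_{ΔF}` are monotone and
`aut(S)` is left adjoint (a Galois connection) to `aut(T)`. -/
theorem stmt3 {C : Type u} [Category.{v} C] {D : Type u} [Category.{v} D]
    (T : C ⥤ D) (S : D ⥤ C) (adj : S ⊣ T)
    (F : C ⥤ Type w) (G : D ⥤ Type w) (θ : F ≅ T ⋙ G)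
    (σ : ∀ Y : D, G.obj Y → F.obj (S.obj Y))
    (hσ : ∀ (Y : D) (y : G.obj Y),
      σ Y y = θ.inv.app (S.obj Y) (G.map (adj.unit.app Y) y))
    (autT : DDelta F → DDelta G)
    (hautT : ∀ d : DDelta F,
      autT d = ⟨T.obj d.1, (θ.hom.app d.1 d.2.1, θ.hom.app d.1 d.2.2)⟩)
    (autS : DDelta G → DDelta F)
    (hautS : ∀ e : DDelta G,
      autS e = ⟨S.obj e.1, (σ e.1 e.2.1, σ e.1 e.2.2)⟩) :
    -- `aut(T)` and `aut(S)` are monotone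
    (∀ d e : DDelta F, DDelta.le d e → DDelta.le (autT d) (autT e)) ∧
    (∀ d e : DDelta G, DDelta.le d e → DDelta.le (autS d) (autS e)) ∧
    -- `aut(S)` is left adjoint to `aut(T)`
    (∀ (d : DDelta G) (c : DDelta F),
      DDelta.le (autS d) c ↔ DDelta.le d (autT c)) := by
  obtain rfl : σ = fun Y y => ((adj.whiskerLeft (Type w)).homEquiv G F θ.inv).app Y y :=
    funext fun Y => funext (hσ Y)
  obtain rfl : autT = DDelta.map θ.hom := funext hautT
  obtain rfl : autS = DDelta.map ((adj.whiskerLeft (Type w)).homEquiv G F θ.inv) :=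
    funext hautS
  have gc := adj.gc_dDeltaMap θ
  exact ⟨fun _ _ h => gc.monotone_u h, fun _ _ h => gc.monotone_l h, gc⟩
end

section
/- Let (C, F) be a pointed connected atomic site. Then the category of elements of F is a cofiltered preorder: between any two objects (X, x) and (Y, y) there is at most one morphism, i.e., any f, g : X ⟶ Y with F(f)(x) = y = F(g)(x) are equal. Equivalently, for every object Z and every element z ∈ F Z, the natural transformation Hom(Z, −) ⟶ F defined by h ↦ F(h)(z) has injective components. -/
open CategoryTheory

universe u v w

/-- A pointed connected atomic site: a small category `C` together with a
set-valued functor `F` such that (i) every morphism is a strict epimorphism,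
(ii) every `F X` is nonempty, (iii) `F` sends morphisms to surjections, and
(iv) the category of elements of `F` is cofiltered. -/
structure IsPCAS {C : Type u} [Category.{v} C] (F : C ⥤ Type w) : Prop where
  strict_epi : ∀ {Y X Z : C} (f : Y ⟶ X) (g : Y ⟶ Z),
    (∀ {W : C} (p q : W ⟶ Y), p ≫ f = q ≫ f → p ≫ g = q ≫ g) →
    ∃! u : X ⟶ Z, f ≫ u = g
  nonempty : ∀ X : C, Nonempty (F.obj X)
  surjective : ∀ {X Y : C} (f : X ⟶ Y), Function.Surjective (F.map f)
  cofiltered : IsCofiltered F.Elements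

/-- For a pointed connected atomic site, the category of elements of `F` is a
(cofiltered) preorder: there is at most one morphism `(X, x) → (Y, y)`.
Equivalently, every natural transformation `Hom(Z, −) ⟶ F`, `h ↦ F(h)(z)`,
has injective components. -/
theorem stmt4 {C : Type u} [Category.{v} C] (F : C ⥤ Type w)
    (hF : IsPCAS F) :
    (∀ (X Y : C) (x : F.obj X) (f g : X ⟶ Y),
      F.map f x = F.map g x → f = g) ∧
    (∀ (Z X : C) (z : F.obj Z),
      Function.Injective (fun h : Z ⟶ X => F.map h z)) := by
  have key : ∀ (X Y : C) (x : F.obj X) (f g : X ⟶ Y),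
      F.map f x = F.map g x → f = g := by
    intro X Y x f g hfg
    haveI := hF.cofiltered
    let Xe : F.Elements := ⟨X, x⟩
    let Ye : F.Elements := ⟨Y, F.map f x⟩
    let fe : Xe ⟶ Ye := ⟨f, rfl⟩
    let ge : Xe ⟶ Ye := ⟨g, hfg.symm⟩
    have heq := IsCofiltered.eq_condition fe ge
    have h1 : (IsCofiltered.eqHom fe ge).val ≫ f
        = (IsCofiltered.eqHom fe ge).val ≫ g := congrArg Subtype.val heq
    set h := (IsCofiltered.eqHom fe ge).val
    obtain ⟨u, hu, huniq⟩ := hF.strict_epi h (h ≫ f)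
      (fun p q hpq => by rw [← Category.assoc, hpq, Category.assoc])
    exact (huniq f rfl).trans (huniq g h1.symm).symm
  exact ⟨key, fun Z X z h₁ h₂ hh => key Z X z h₁ h₂ hh⟩
end

section
/- Let (C, F) be a pointed connected atomic site. Then the functor F is faithful, and F reflects isomorphisms: if f : X ⟶ Y is a morphism of C such that F(f) is a bijection, then f is an isomorphism. -/
/-!
Strictness makes every morphism an epimorphism. Two morphisms `f g : X ⟶ Y` with
`F f = F g` are parallel arrows `(X, x) ⟶ (Y, F f x)` in the cofiltered category of
elements, so some `h` equalizes them, and cancelling the epimorphism `h` gives `f = g`.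
If `F f` is bijective, then `f` is a monomorphism since faithful functors reflect them;
strictness then factors `𝟙` through `f`, so `f` is a split mono and an epi, hence an iso.
-/

open CategoryTheory

universe u v w

namespace IsPCAS

variable {C : Type u} [Category.{v} C] {F : C ⥤ Type w}

theorem epi (hF : IsPCAS F) {X Y : C} (f : X ⟶ Y) : Epi f where
  left_cancellation {Z} u v huv := by
    obtain ⟨w, -, hw⟩ := hF.strict_epi f (f ≫ u) fun p q hpq => by
      rw [← Category.assoc, hpq, Category.assoc]
    exact (hw u rfl).trans (hw v huv.symm).symm

theorem faithful (hF : IsPCAS F) : F.Faithful where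
  map_injective {X Y} f g hfg := by
    have := hF.cofiltered
    obtain ⟨x⟩ := hF.nonempty X
    let f' : F.elementsMk X x ⟶ F.elementsMk Y (F.map f x) := ⟨f, rfl⟩
    let g' : F.elementsMk X x ⟶ F.elementsMk Y (F.map f x) := ⟨g, by rw [hfg]⟩
    let h := (IsCofiltered.eqHom f' g').1
    have hcomp : h ≫ f = h ≫ g := congrArg Subtype.val (IsCofiltered.eq_condition f' g')
    have := hF.epi h
    exact cancel_epi h |>.mp hcomp

theorem isIso_of_mono (hF : IsPCAS F) {X Y : C} (f : X ⟶ Y) [Mono f] : IsIso f := by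
  obtain ⟨g, hfg, -⟩ := hF.strict_epi f (𝟙 X) fun p q h => by
    simpa using cancel_mono f |>.mp h
  have : IsSplitMono f := IsSplitMono.mk' ⟨g, hfg⟩
  have := hF.epi f
  exact isIso_of_epi_of_isSplitMono f

end IsPCAS

/-- For a pointed connected atomic site `(C, F)`, the functor `F` is faithful
and reflects isomorphisms. -/
theorem stmt5 {C : Type u} [Category.{v} C] (F : C ⥤ Type w)
    (hF : IsPCAS F) :
    F.Faithful ∧
    (∀ {X Y : C} (f : X ⟶ Y), Function.Bijective (F.map f) → IsIso f) := by
  have := hF.faithful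
  refine ⟨this, fun f hbij => ?_⟩
  have : Mono f := F.mono_of_mono_map <| (mono_iff_injective _).mpr hbij.injective
  exact hF.isIso_of_mono f
end

section
/- Let (C, F) be a pointed connected atomic site and (A, a) a Galois pair. Then for every object X of C, the evaluation map ev_a : Hom(A, X) → F X, h ↦ F(h)(a), is a bijection if and only if there exists a morphism A ⟶ X in C. -/
open CategoryTheory

universe u v w

/-- If `(C, F)` is a pointed connected atomic site and `(A, a)` is a Galois
pair (the evaluation `Hom(A, A) → F A`, `h ↦ F(h)(a)`, is bijective), then
for every object `X` the evaluation `Hom(A, X) → F X` at `a` is a bijection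
iff there exists a morphism `A ⟶ X`. -/
theorem stmt12 {C : Type u} [Category.{v} C] (F : C ⥤ Type w)
    (hF : IsPCAS F) (A : C) (a : F.obj A)
    (hGal : Function.Bijective (fun h : A ⟶ A => F.map h a)) :
    ∀ X : C,
      Function.Bijective (fun h : A ⟶ X => F.map h a) ↔ Nonempty (A ⟶ X) := by
  -- every morphism is epi
  have epi : ∀ {Y X Z : C} (w : Y ⟶ X) (u v : X ⟶ Z), w ≫ u = w ≫ v → u = v := by
    intro Y X Z w u v h
    obtain ⟨s, -, hs⟩ := hF.strict_epi w (w ≫ u)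
      (fun {W} p q hpq => by rw [← Category.assoc, ← Category.assoc, hpq])
    exact (hs u rfl).trans (hs v h.symm).symm
  intro X
  constructor
  · intro hb
    obtain ⟨x⟩ := hF.nonempty X
    obtain ⟨h, -⟩ := hb.2 x
    exact ⟨h⟩
  · rintro ⟨f⟩
    constructor
    · -- injectivity
      intro u v huv
      simp only at huv
      haveI := hF.cofiltered
      let p : F.Elements := ⟨A, a⟩
      let q : F.Elements := ⟨X, F.map u a⟩
      let u' : p ⟶ q := ⟨u, rfl⟩
      let v' : p ⟶ q := ⟨v, huv.symm⟩
      have heq : IsCofiltered.eqHom u' v' ≫ u' = IsCofiltered.eqHom u' v' ≫ v' :=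
        IsCofiltered.eq_condition u' v'
      have := congrArg Subtype.val heq
      exact epi (IsCofiltered.eqHom u' v').val u v this
    · -- surjectivity
      intro x
      obtain ⟨a', ha'⟩ := hF.surjective f x
      obtain ⟨σ, hσ⟩ := hGal.2 a'
      refine ⟨σ ≫ f, ?_⟩
      simp only [F.map_comp, types_comp_apply]
      rw [show F.map σ a = a' from hσ, ha']
end

section
/- Let (C, F) be a pointed connected atomic site, let (A, a) and (B, b) be Galois pairs, and let f : B ⟶ A be a morphism with F(f)(b) = a. Then for every object X such that the evaluation ev_a : Hom(A, X) → F X, h ↦ F(h)(a), is a bijection, the evaluation ev_b : Hom(B, X) → F X, h ↦ F(h)(b), is also a bijection, and precomposition with f gives a bijection Hom(A, X) → Hom(B, X). -/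
open CategoryTheory

universe u v w

/-- Every morphism is an epimorphism in a PCAS. -/
lemma IsPCAS.cancel {C : Type u} [Category.{v} C] {F : C ⥤ Type w}
    (hF : IsPCAS F) {Y X Z : C} (e : Y ⟶ X) (u v : X ⟶ Z)
    (h : e ≫ u = e ≫ v) : u = v := by
  obtain ⟨w, hw, huniq⟩ := hF.strict_epi e (e ≫ u)
    (fun {W} p q hpq => by rw [← Category.assoc, ← Category.assoc, hpq])
  rw [huniq u rfl, huniq v h.symm]

/-- Evaluation at a point is injective in a PCAS. -/
lemma IsPCAS.ev_inj {C : Type u} [Category.{v} C] {F : C ⥤ Type w}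
    (hF : IsPCAS F) {B X : C} (b : F.obj B) :
    Function.Injective (fun h : B ⟶ X => F.map h b) := by
  intro g₁ g₂ hg
  haveI := hF.cofiltered
  simp only at hg
  let Bb : F.Elements := ⟨B, b⟩
  let Xx : F.Elements := ⟨X, F.map g₁ b⟩
  let G₁ : Bb ⟶ Xx := ⟨g₁, rfl⟩
  let G₂ : Bb ⟶ Xx := ⟨g₂, hg.symm⟩
  have he : IsCofiltered.eqHom G₁ G₂ ≫ G₁ = IsCofiltered.eqHom G₁ G₂ ≫ G₂ :=
    IsCofiltered.eq_condition G₁ G₂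
  have he' : (IsCofiltered.eqHom G₁ G₂).val ≫ g₁ = (IsCofiltered.eqHom G₁ G₂).val ≫ g₂ :=
    congrArg Subtype.val he
  exact hF.cancel _ g₁ g₂ he'

/-- For Galois pairs `(A, a)` and `(B, b)` of a pointed connected atomic site
and `f : B ⟶ A` with `F(f)(b) = a`: every object `X` split by `(A, a)` (i.e.
with `ev_a : Hom(A, X) → F X` bijective) is also split by `(B, b)`, and
precomposition with `f` is a bijection `Hom(A, X) → Hom(B, X)`. -/
theorem stmt13 {C : Type u} [Category.{v} C] (F : C ⥤ Type w)
    (hF : IsPCAS F) (A B : C) (a : F.obj A) (b : F.obj B)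
    (hGalA : Function.Bijective (fun h : A ⟶ A => F.map h a))
    (hGalB : Function.Bijective (fun h : B ⟶ B => F.map h b))
    (f : B ⟶ A) (hf : F.map f b = a) :
    ∀ X : C,
      Function.Bijective (fun h : A ⟶ X => F.map h a) →
      Function.Bijective (fun h : B ⟶ X => F.map h b) ∧
      Function.Bijective (fun x : A ⟶ X => f ≫ x) := by
  intro X hX
  have key : ∀ x : A ⟶ X, F.map (f ≫ x) b = F.map x a := by
    intro x
    rw [F.map_comp, types_comp_apply, hf]
  have hinj : Function.Injective (fun h : B ⟶ X => F.map h b) := hF.ev_inj b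
  have hsurj : Function.Surjective (fun h : B ⟶ X => F.map h b) := by
    intro x
    obtain ⟨h, hh⟩ := hX.2 x
    exact ⟨f ≫ h, (key h).trans hh⟩
  refine ⟨⟨hinj, hsurj⟩, ⟨?_, ?_⟩⟩
  · intro x₁ x₂ hx
    apply hX.1
    simp only
    rw [← key x₁, ← key x₂, show f ≫ x₁ = f ≫ x₂ from hx]
  · intro g
    obtain ⟨x, hx⟩ := hX.2 (F.map g b)
    exact ⟨x, hinj ((key x).trans hx)⟩
end
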